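/- arXiv:1809.06099 — 3 statements merged into one kernel-verified Lean document; each statement's English description precedes it below -/
import Mathlib

section
/- Let d ≥ 3 and define C := (1/(2^d − 2))·Σ_{K ⊆ {1,...,d}, 1 ≤ |K| ≤ d−1} ν_K(M). Then C is a d-dimensional copula that is Kendall-countermonotonic but is not K-countermonotonic for any K ⊆ {1,...,d} with 2 ≤ |K| ≤ d. -/
open MeasureTheory unitInterval

/-- The unit cube `[0,1]^d`, modelled as functions `Fin d → [0,1]`. -/
abbrev Cube (d : ℕ) : Type := Fin d → unitInterval

/-- `η_K(u,v)`: the vector whose `k`-th coordinate is `v k` if `k ∈ K` and `u k` otherwise. -/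
def etaK {d : ℕ} (K : Finset (Fin d)) (u v : Cube d) : Cube d :=
  fun k => if k ∈ K then v k else u k

/-- `C` is a `d`-dimensional copula. -/
def IsCopula {d : ℕ} (C : Cube d → ℝ) : Prop :=
  (∀ u v : Cube d, u ≤ v →
      0 ≤ ∑ K : Finset (Fin d), (-1 : ℝ) ^ (d - K.card) * C (etaK K u v)) ∧
  (∀ k : Fin d, ∀ u : Cube d, C (etaK {k} u 0) = 0) ∧
  (∀ k : Fin d, ∀ u : Cube d, C (etaK {k} 1 u) = (u k : ℝ))

/-- The reflection `ν_K`, i.e. the composition of the commuting reflections `ν_k`, `k ∈ K`,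
written in closed (inclusion–exclusion) form: the coordinates in `L ⊆ K` are reflected to
`1 - u k`, the remaining coordinates of `K` are set to `1`. -/
noncomputable def nuK {d : ℕ} (K : Finset (Fin d)) (C : Cube d → ℝ) : Cube d → ℝ :=
  fun u => ∑ L ∈ K.powerset, (-1 : ℝ) ^ L.card *
    C (fun k => if k ∈ L then unitInterval.symm (u k) else if k ∈ K then 1 else u k)

/-- The total reflection `τ = ν_{{1,...,d}}`, sending a copula to its survival copula. -/
noncomputable def survival {d : ℕ} (C : Cube d → ℝ) : Cube d → ℝ := nuK Finset.univ C

/-- The concordance order `C ⪯ D`: `C(u) ≤ D(u)` and `(τ C)(u) ≤ (τ D)(u)` for all `u`. -/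
def ConcLE {d : ℕ} (C D : Cube d → ℝ) : Prop :=
  (∀ u, C u ≤ D u) ∧ (∀ u, survival C u ≤ survival D u)

/-- A minimal copula: a minimal element of the set of all copulas w.r.t. concordance order. -/
def IsMinimalCopula {d : ℕ} (C : Cube d → ℝ) : Prop :=
  IsCopula C ∧ ∀ D : Cube d → ℝ, IsCopula D → ConcLE D C → D = C

/-- `μ` is the copula measure `Q^C` of `C`: a Borel probability measure on the cube
with `μ [0,u] = C u` for all `u`. -/
def IsCopulaMeasure {d : ℕ} (C : Cube d → ℝ) (μ : Measure (Cube d)) : Prop :=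
  IsProbabilityMeasure μ ∧ ∀ u : Cube d, μ (Set.Icc 0 u) = ENNReal.ofReal (C u)

/-- `C` is `K`-countermonotonic: there are strictly increasing continuous functions
`g k : [0,1] → ℝ` (`k ∈ K`) and `c : ℝ` with `Q^C {u : ∑ k ∈ K, g k (u k) = c} = 1`. -/
def IsKCM {d : ℕ} (K : Finset (Fin d)) (C : Cube d → ℝ) : Prop :=
  ∃ (g : Fin d → unitInterval → ℝ) (c : ℝ),
    (∀ k ∈ K, StrictMono (g k) ∧ Continuous (g k)) ∧
    ∃ μ : Measure (Cube d), IsCopulaMeasure C μ ∧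
      μ {u : Cube d | ∑ k ∈ K, g k (u k) = c} = 1

/-- `C` is Kendall-countermonotonic (`τ`-CM):
`min (C u) ((τ C)(1 - u)) = 0` for every `u` with `0 < u < 1` coordinatewise. -/
noncomputable def IsTauCM {d : ℕ} (C : Cube d → ℝ) : Prop :=
  ∀ u : Cube d, (∀ k, 0 < u k ∧ u k < 1) →
    min (C u) (survival C (fun k => unitInterval.symm (u k))) = 0

/-- The upper Fréchet–Hoeffding bound `M(u) = min {u_1, ..., u_d}`. -/
noncomputable def Mcop {d : ℕ} : Cube d → ℝ :=
  fun u => sInf (Set.range fun k => (u k : ℝ))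


open scoped Classical

noncomputable def chi (P : Prop) : ℝ := if P then 1 else 0

lemma chi_eq_one {P : Prop} (h : P) : chi P = 1 := if_pos h
lemma chi_eq_zero {P : Prop} (h : ¬ P) : chi P = 0 := if_neg h
lemma chi_nonneg (P : Prop) : 0 ≤ chi P := by unfold chi; split <;> norm_num
lemma chi_le_one (P : Prop) : chi P ≤ 1 := by unfold chi; split <;> norm_num
lemma chi_congr {P Q : Prop} (h : P ↔ Q) : chi P = chi Q := by unfold chi; by_cases hP : P <;> simp [hP, h.symm, (h.mp), *] <;> simp [h.symm] at hP <;> simp [hP]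
lemma chi_mul (P Q : Prop) : chi P * chi Q = chi (P ∧ Q) := by
  unfold chi; by_cases hP : P <;> by_cases hQ : Q <;> simp [hP, hQ]
lemma chi_sub {P Q : Prop} (h : Q → P) : chi P - chi Q = chi (P ∧ ¬ Q) := by
  unfold chi; by_cases hP : P <;> by_cases hQ : Q <;> simp [hP, hQ, h] <;> tauto
lemma chi_mono {P Q : Prop} (h : P → Q) : chi P ≤ chi Q := by
  unfold chi; by_cases hP : P <;> simp [hP, h, chi_le_one] <;> split <;> norm_num
lemma one_sub_chi (P : Prop) : 1 - chi P = chi (¬ P) := by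
  unfold chi; by_cases hP : P <;> simp [hP]
lemma chi_prod {ι : Type*} (s : Finset ι) (P : ι → Prop) :
    ∏ i ∈ s, chi (P i) = chi (∀ i ∈ s, P i) := by
  induction s using Finset.induction_on with
  | empty => simp [chi]
  | @insert _ _ h ih =>
      rw [Finset.prod_insert h, ih, chi_mul]
      exact chi_congr (by simp [Finset.forall_mem_insert])

lemma prod_sub_expand {ι : Type*} [DecidableEq ι] (s : Finset ι) (f g : ι → ℝ) :
    ∏ i ∈ s, (f i - g i)
      = ∑ L ∈ s.powerset, (-1 : ℝ) ^ L.card * ((∏ i ∈ L, g i) * ∏ i ∈ s \ L, f i) := by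
  have h := Finset.prod_add (fun i => -g i) f s
  have h2 : ∀ i, -g i + f i = f i - g i := fun i => by ring
  simp only [h2] at h
  rw [h]
  refine Finset.sum_congr rfl fun L hL => ?_
  rw [show (∏ i ∈ L, -g i) = ∏ i ∈ L, (-1 : ℝ) * g i by simp,
    Finset.prod_mul_distrib, Finset.prod_const]
  ring

section Meas
variable {α : Type*} [MeasurableSpace α] {μ : Measure α} [IsFiniteMeasure μ]

lemma chi_indicator (S : Set α) : (fun t => chi (t ∈ S)) = S.indicator (fun _ => (1:ℝ)) := by
  funext t; simp [chi, Set.indicator_apply]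

lemma integrable_chi {S : Set α} (hS : MeasurableSet S) :
    Integrable (fun t => chi (t ∈ S)) μ := by
  rw [chi_indicator]; exact (integrable_const 1).indicator hS

lemma integral_chi {S : Set α} (hS : MeasurableSet S) :
    ∫ t, chi (t ∈ S) ∂μ = (μ S).toReal := by
  rw [chi_indicator]; exact integral_indicator_one hS

end Meas

noncomputable def rho : Measure ℝ := volume.restrict (Set.Icc 0 1)

instance : IsFiniteMeasure rho := by
  constructor
  rw [rho, Measure.restrict_apply_univ]
  simp [Real.volume_Icc]

lemma rho_apply {S : Set ℝ} (hS : MeasurableSet S) :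
    rho S = volume (S ∩ Set.Icc 0 1) := Measure.restrict_apply hS

def condK {d : ℕ} (K : Finset (Fin d)) (k : Fin d) (t : ℝ) (x : unitInterval) : Prop :=
  if k ∈ K then 1 - (x:ℝ) < t else t ≤ (x:ℝ)

lemma condK_mono {d : ℕ} {K : Finset (Fin d)} {k : Fin d} {t : ℝ} {x y : unitInterval}
    (h : x ≤ y) : condK K k t x → condK K k t y := by
  have hxy : (x:ℝ) ≤ (y:ℝ) := h
  unfold condK; split <;> intro h' <;> linarith

def Aset {d : ℕ} (K : Finset (Fin d)) (u : Cube d) : Set ℝ := {t | ∀ k, condK K k t (u k)}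

def Bset {d : ℕ} (K : Finset (Fin d)) (u v : Cube d) : Set ℝ :=
  {t | ∀ k, condK K k t (v k) ∧ ¬ condK K k t (u k)}

lemma measurableSet_condK {d : ℕ} (K : Finset (Fin d)) (k : Fin d) (x : unitInterval) :
    MeasurableSet {t : ℝ | condK K k t x} := by
  unfold condK; split
  · exact measurableSet_Ioi
  · exact measurableSet_Iic

lemma measurableSet_Aset {d : ℕ} (K : Finset (Fin d)) (u : Cube d) :
    MeasurableSet (Aset K u) := by
  have : Aset K u = ⋂ k, {t | condK K k t (u k)} := by ext t; simp [Aset, Set.mem_iInter]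
  rw [this]; exact MeasurableSet.iInter fun k => measurableSet_condK K k (u k)

lemma measurableSet_Bset {d : ℕ} (K : Finset (Fin d)) (u v : Cube d) :
    MeasurableSet (Bset K u v) := by
  have : Bset K u v = ⋂ k, ({t | condK K k t (v k)} ∩ {t | condK K k t (u k)}ᶜ) := by
    ext t; simp [Bset, Set.mem_iInter, forall_and]
  rw [this]
  exact MeasurableSet.iInter fun k =>
    (measurableSet_condK K k (v k)).inter (measurableSet_condK K k (u k)).compl

lemma rho_ae_mem : ∀ᵐ t ∂rho, t ∈ Set.Icc (0:ℝ) 1 := by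
  rw [rho]; exact ae_restrict_mem measurableSet_Icc

lemma Mcop_eq {d : ℕ} (hd : 0 < d) (w : Cube d) :
    Mcop w = (rho {t : ℝ | ∀ k, t ≤ (w k : ℝ)}).toReal := by
  have hne : (Set.range fun k => (w k : ℝ)).Nonempty := ⟨w ⟨0, hd⟩, ⟨⟨0, hd⟩, rfl⟩⟩
  have hbdd : BddBelow (Set.range fun k => (w k : ℝ)) := (Set.finite_range _).bddBelow
  set m := sInf (Set.range fun k => (w k : ℝ)) with hm
  have hm0 : 0 ≤ m := le_csInf hne (by rintro b ⟨k, rfl⟩; exact (w k).2.1)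
  have hm1 : m ≤ 1 := le_trans (csInf_le hbdd ⟨⟨0, hd⟩, rfl⟩) (w ⟨0, hd⟩).2.2
  have hset : {t : ℝ | ∀ k, t ≤ (w k : ℝ)} = Set.Iic m := by
    ext t
    simp only [Set.mem_setOf_eq, Set.mem_Iic, hm, le_csInf_iff hbdd hne,
      Set.forall_mem_range]
  have : rho (Set.Iic m) = ENNReal.ofReal m := by
    rw [rho_apply measurableSet_Iic]
    have : Set.Iic m ∩ Set.Icc 0 1 = Set.Icc 0 m := by
      ext t; simp only [Set.mem_inter_iff, Set.mem_Iic, Set.mem_Icc]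
      constructor
      · rintro ⟨h1, h2, _⟩; exact ⟨h2, h1⟩
      · rintro ⟨h1, h2⟩; exact ⟨h2, h1, le_trans h2 hm1⟩
    rw [this, Real.volume_Icc]; simp
  rw [Mcop, hset, this, ENNReal.toReal_ofReal hm0]

lemma nuK_eq {d : ℕ} (hd : 0 < d) (K : Finset (Fin d)) (u : Cube d) :
    nuK K Mcop u = (rho (Aset K u)).toReal := by
  classical
  set p : Finset (Fin d) → Cube d := fun L k =>
    if k ∈ L then unitInterval.symm (u k) else if k ∈ K then 1 else u k with hp
  have hmeas : ∀ w : Cube d, MeasurableSet {t : ℝ | ∀ k, t ≤ (w k:ℝ)} := fun w => by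
    have : {t : ℝ | ∀ k, t ≤ (w k:ℝ)} = ⋂ k, Set.Iic (w k:ℝ) := by
      ext t; simp [Set.mem_iInter]
    rw [this]; exact MeasurableSet.iInter fun _ => measurableSet_Iic
  have hM : ∀ w : Cube d, Mcop w = ∫ t, chi (∀ k, t ≤ (w k:ℝ)) ∂rho := fun w => by
    rw [Mcop_eq hd w, ← integral_chi (hmeas w)]; rfl
  have h1 : ∀ L ∈ K.powerset, (-1:ℝ)^L.card * Mcop (p L)
      = ∫ t, (-1:ℝ)^L.card * chi (∀ k, t ≤ ((p L k : unitInterval):ℝ)) ∂rho := by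
    intro L _
    rw [hM (p L), MeasureTheory.integral_const_mul]
  have hswap : ∫ t, ∑ L ∈ K.powerset, (-1:ℝ)^L.card * chi (∀ k, t ≤ ((p L k : unitInterval):ℝ)) ∂rho
      = ∑ L ∈ K.powerset, ∫ t, (-1:ℝ)^L.card * chi (∀ k, t ≤ ((p L k : unitInterval):ℝ)) ∂rho :=
    integral_finset_sum _ (fun L _ => ((integrable_chi (hmeas (p L))).const_mul _))
  have key : nuK K Mcop u
      = ∫ t, ∑ L ∈ K.powerset, (-1:ℝ)^L.card * chi (∀ k, t ≤ ((p L k : unitInterval):ℝ)) ∂rho := by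
    rw [nuK, Finset.sum_congr rfl h1, ← hswap]
  rw [key, ← integral_chi (measurableSet_Aset K u)]
  refine integral_congr_ae ?_
  filter_upwards [rho_ae_mem] with t ht
  -- pointwise identity
  have hsplit : ∀ L ∈ K.powerset, chi (∀ k, t ≤ ((p L k : unitInterval):ℝ))
      = (∏ k ∈ Kᶜ, chi (t ≤ (u k:ℝ))) *
        ((∏ k ∈ K \ L, chi (t ≤ (1:ℝ))) * ∏ k ∈ L, chi (t ≤ 1 - (u k:ℝ))) := by
    intro L hL
    have hLK : L ⊆ K := Finset.mem_powerset.mp hL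
    have : chi (∀ k, t ≤ ((p L k : unitInterval):ℝ))
        = ∏ k, chi (t ≤ ((p L k : unitInterval):ℝ)) := by
      rw [chi_prod Finset.univ]
      exact chi_congr (by simp)
    rw [this, ← Finset.prod_mul_prod_compl K, ← Finset.prod_sdiff hLK, mul_comm]
    congr 1
    · refine Finset.prod_congr rfl fun k hk => ?_
      have hkK : k ∉ K := Finset.mem_compl.mp hk
      have hkL : k ∉ L := fun h => hkK (hLK h)
      simp [hp, hkK, hkL]
    congr 1
    · refine Finset.prod_congr rfl fun k hk => ?_
      have hkK : k ∈ K := (Finset.mem_sdiff.mp hk).1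
      have hkL : k ∉ L := (Finset.mem_sdiff.mp hk).2
      simp [hp, hkK, hkL]
    · refine Finset.prod_congr rfl fun k hk => ?_
      simp [hp, hk]
  calc ∑ L ∈ K.powerset, (-1:ℝ)^L.card * chi (∀ k, t ≤ ((p L k : unitInterval):ℝ))
      = (∏ k ∈ Kᶜ, chi (t ≤ (u k:ℝ))) *
        ∑ L ∈ K.powerset, (-1:ℝ)^L.card *
          ((∏ k ∈ L, chi (t ≤ 1 - (u k:ℝ))) * ∏ k ∈ K \ L, chi (t ≤ (1:ℝ))) := by
        rw [Finset.mul_sum]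
        exact Finset.sum_congr rfl fun L hL => by rw [hsplit L hL]; ring
    _ = (∏ k ∈ Kᶜ, chi (t ≤ (u k:ℝ))) *
        ∏ k ∈ K, (chi (t ≤ (1:ℝ)) - chi (t ≤ 1 - (u k:ℝ))) := by
        rw [prod_sub_expand]
    _ = chi (t ∈ Aset K u) := by
        have hfac : ∀ k ∈ K, chi (t ≤ (1:ℝ)) - chi (t ≤ 1 - (u k:ℝ))
            = chi (condK K k t (u k)) := by
          intro k hk
          rw [chi_eq_one ht.2, one_sub_chi]
          exact chi_congr (by rw [not_le]; unfold condK; rw [if_pos hk])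
        have hfac2 : ∀ k ∈ Kᶜ, chi (t ≤ (u k:ℝ)) = chi (condK K k t (u k)) := by
          intro k hk
          exact chi_congr (by unfold condK; rw [if_neg (Finset.mem_compl.mp hk)])
        rw [Finset.prod_congr rfl hfac, Finset.prod_congr rfl hfac2, mul_comm,
          Finset.prod_mul_prod_compl K, chi_prod]
        exact chi_congr (by simp [Aset])

lemma prod_sub_expand' {ι : Type*} [DecidableEq ι] [Fintype ι] (f g : ι → ℝ) :
    ∏ i, (f i - g i)
      = ∑ J : Finset ι, (-1:ℝ) ^ (Fintype.card ι - J.card) * ((∏ i ∈ J, f i) * ∏ i ∈ Jᶜ, g i) := by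
  rw [prod_sub_expand Finset.univ f g, Finset.powerset_univ]
  have hbij : Function.Bijective (fun L : Finset ι => Lᶜ) :=
    Function.Involutive.bijective (fun L => compl_compl L)
  refine Fintype.sum_bijective _ hbij _ _ fun L => ?_
  have h1 : (Lᶜ).card = Fintype.card ι - L.card := Finset.card_compl L
  have h2 : Fintype.card ι - (Lᶜ).card = L.card := by
    have := Finset.card_le_univ L
    rw [h1]; omega
  rw [h2, compl_compl, Finset.compl_eq_univ_sdiff]
  ring

lemma alt_rect {α : Type*} [MeasurableSpace α] (μ : Measure α) [IsFiniteMeasure μ] {d : ℕ}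
    (cond : Fin d → α → unitInterval → Prop)
    (u v : Cube d) (huv : u ≤ v)
    (hmono : ∀ k t, ∀ {x y : unitInterval}, x ≤ y → cond k t x → cond k t y)
    (hmeas : ∀ w : Cube d, MeasurableSet {t | ∀ k, cond k t (w k)})
    (hmeasB : MeasurableSet {t | ∀ k, cond k t (v k) ∧ ¬ cond k t (u k)}) :
    ∑ J : Finset (Fin d), (-1:ℝ) ^ (d - J.card) * (μ {t | ∀ k, cond k t (etaK J u v k)}).toReal
      = (μ {t | ∀ k, cond k t (v k) ∧ ¬ cond k t (u k)}).toReal := by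
  classical
  have hterm : ∀ J : Finset (Fin d), (-1:ℝ) ^ (d - J.card) * (μ {t | ∀ k, cond k t (etaK J u v k)}).toReal
      = ∫ t, (-1:ℝ) ^ (d - J.card) * chi (t ∈ {t | ∀ k, cond k t (etaK J u v k)}) ∂μ := by
    intro J
    rw [MeasureTheory.integral_const_mul, integral_chi (hmeas _)]
  have hswap : ∫ t, ∑ J : Finset (Fin d), (-1:ℝ) ^ (d - J.card) * chi (t ∈ {t | ∀ k, cond k t (etaK J u v k)}) ∂μ
      = ∑ J : Finset (Fin d), ∫ t, (-1:ℝ) ^ (d - J.card) * chi (t ∈ {t | ∀ k, cond k t (etaK J u v k)}) ∂μ :=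
    integral_finset_sum _ (fun J _ => ((integrable_chi (hmeas _)).const_mul _))
  rw [Finset.sum_congr rfl (fun J _ => hterm J), ← hswap, ← integral_chi hmeasB]
  refine integral_congr_ae (Filter.Eventually.of_forall fun t => ?_)
  have hS : ∀ J : Finset (Fin d), chi (t ∈ {t | ∀ k, cond k t (etaK J u v k)})
      = (∏ k ∈ J, chi (cond k t (v k))) * ∏ k ∈ Jᶜ, chi (cond k t (u k)) := by
    intro J
    have : chi (t ∈ {t | ∀ k, cond k t (etaK J u v k)})
        = ∏ k, chi (cond k t (etaK J u v k)) := by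
      rw [chi_prod Finset.univ]; exact chi_congr (by simp [Set.mem_setOf_eq])
    rw [this, ← Finset.prod_mul_prod_compl J]
    congr 1
    · exact Finset.prod_congr rfl fun k hk => by rw [etaK, if_pos hk]
    · exact Finset.prod_congr rfl fun k hk => by rw [etaK, if_neg (Finset.mem_compl.mp hk)]
  calc ∑ J : Finset (Fin d), (-1:ℝ) ^ (d - J.card) * chi (t ∈ {t | ∀ k, cond k t (etaK J u v k)})
      = ∑ J : Finset (Fin d), (-1:ℝ) ^ (Fintype.card (Fin d) - J.card) *
          ((∏ k ∈ J, chi (cond k t (v k))) * ∏ k ∈ Jᶜ, chi (cond k t (u k))) := by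
        refine Finset.sum_congr rfl fun J _ => ?_
        rw [hS J, Fintype.card_fin]
    _ = ∏ k, (chi (cond k t (v k)) - chi (cond k t (u k))) := (prod_sub_expand' _ _).symm
    _ = ∏ k, chi (cond k t (v k) ∧ ¬ cond k t (u k)) := by
        refine Finset.prod_congr rfl fun k _ => ?_
        exact chi_sub (hmono k t (huv k))
    _ = chi (t ∈ {t | ∀ k, cond k t (v k) ∧ ¬ cond k t (u k)}) := by
        rw [chi_prod Finset.univ]; exact chi_congr (by simp [Set.mem_setOf_eq])

lemma rect_eq {d : ℕ} (K : Finset (Fin d)) (u v : Cube d) (huv : u ≤ v) :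
    ∑ J : Finset (Fin d), (-1:ℝ) ^ (d - J.card) * (rho (Aset K (etaK J u v))).toReal
      = (rho (Bset K u v)).toReal := by
  exact alt_rect rho (fun k t x => condK K k t x) u v huv
    (fun k t {x y} h => condK_mono h)
    (fun w => measurableSet_Aset K w)
    (measurableSet_Bset K u v)

def BoxSet {d : ℕ} (u v : Cube d) : Set (Cube d) :=
  {y | ∀ k, ((y k : ℝ) ≤ (v k : ℝ)) ∧ ¬ ((y k : ℝ) ≤ (u k : ℝ))}

lemma measurableSet_coordLe {d : ℕ} (k : Fin d) (a : ℝ) :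
    MeasurableSet {y : Cube d | (y k : ℝ) ≤ a} := by
  have : {y : Cube d | (y k : ℝ) ≤ a} = (fun y : Cube d => (y k : ℝ)) ⁻¹' Set.Iic a := rfl
  rw [this]
  exact (measurable_subtype_coe.comp (measurable_pi_apply k)) measurableSet_Iic

lemma measurableSet_IccCube {d : ℕ} (w : Cube d) :
    MeasurableSet {y : Cube d | ∀ k, (y k : ℝ) ≤ (w k : ℝ)} := by
  have : {y : Cube d | ∀ k, (y k : ℝ) ≤ (w k : ℝ)} = ⋂ k, {y : Cube d | (y k : ℝ) ≤ (w k : ℝ)} := by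
    ext y; simp [Set.mem_iInter]
  rw [this]; exact MeasurableSet.iInter fun k => measurableSet_coordLe k _

lemma measurableSet_BoxSet {d : ℕ} (u v : Cube d) : MeasurableSet (BoxSet u v) := by
  have : BoxSet u v = ⋂ k, ({y : Cube d | (y k : ℝ) ≤ (v k : ℝ)} ∩ {y : Cube d | (y k : ℝ) ≤ (u k : ℝ)}ᶜ) := by
    ext y; simp [BoxSet, Set.mem_iInter, forall_and]
  rw [this]
  exact MeasurableSet.iInter fun k =>
    (measurableSet_coordLe k _).inter (measurableSet_coordLe k _).compl

lemma Icc_zero_eq {d : ℕ} (w : Cube d) :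
    Set.Icc (0 : Cube d) w = {y : Cube d | ∀ k, (y k : ℝ) ≤ (w k : ℝ)} := by
  ext y
  simp only [Set.mem_Icc, Set.mem_setOf_eq]
  constructor
  · rintro ⟨-, h2⟩ k; exact h2 k
  · intro h
    refine ⟨fun k => ?_, fun k => h k⟩
    show (0 : unitInterval) ≤ y k
    exact (y k).2.1

lemma box_eq {d : ℕ} (μ : Measure (Cube d)) [IsFiniteMeasure μ] (u v : Cube d) (huv : u ≤ v) :
    ∑ J : Finset (Fin d), (-1:ℝ) ^ (d - J.card) * (μ (Set.Icc 0 (etaK J u v))).toReal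
      = (μ (BoxSet u v)).toReal := by
  have h := alt_rect μ (fun k y x => (y k : ℝ) ≤ (x : ℝ)) u v huv
    (fun k y {x z} h h' => le_trans h' h)
    (fun w => measurableSet_IccCube w)
    (by exact measurableSet_BoxSet u v)
  simp only [Icc_zero_eq]
  exact h

lemma rho_ae_ne_zero : ∀ᵐ t ∂rho, t ≠ 0 := by
  rw [ae_iff]
  have h0 : {a : ℝ | ¬ a ≠ 0} = {0} := by ext a; simp
  rw [h0, rho_apply (measurableSet_singleton 0)]
  exact measure_mono_null Set.inter_subset_left Real.volume_singleton

lemma survsum_eq {d : ℕ} (K : Finset (Fin d)) (u : Cube d) :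
    ∑ L : Finset (Fin d), (-1:ℝ) ^ L.card *
        (rho (Aset K (fun k => if k ∈ L then unitInterval.symm (u k) else 1))).toReal
      = (rho (Aset Kᶜ u)).toReal := by
  classical
  set q : Finset (Fin d) → Cube d := fun L k => if k ∈ L then unitInterval.symm (u k) else 1 with hq
  have hterm : ∀ L : Finset (Fin d), (-1:ℝ) ^ L.card * (rho (Aset K (q L))).toReal
      = ∫ t, (-1:ℝ) ^ L.card * chi (t ∈ Aset K (q L)) ∂rho := by
    intro L
    rw [MeasureTheory.integral_const_mul, integral_chi (measurableSet_Aset K (q L))]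
  have hswap : ∫ t, ∑ L : Finset (Fin d), (-1:ℝ) ^ L.card * chi (t ∈ Aset K (q L)) ∂rho
      = ∑ L : Finset (Fin d), ∫ t, (-1:ℝ) ^ L.card * chi (t ∈ Aset K (q L)) ∂rho :=
    integral_finset_sum _ (fun L _ => ((integrable_chi (measurableSet_Aset K (q L))).const_mul _))
  rw [Finset.sum_congr rfl (fun L _ => hterm L), ← hswap,
    ← integral_chi (measurableSet_Aset Kᶜ u)]
  refine integral_congr_ae ?_
  filter_upwards [rho_ae_mem, rho_ae_ne_zero] with t ht ht0
  have ht0' : 0 < t := lt_of_le_of_ne ht.1 (Ne.symm ht0)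
  have hS : ∀ L : Finset (Fin d), chi (t ∈ Aset K (q L))
      = (∏ k ∈ Finset.univ \ L, chi (condK K k t 1)) *
        ∏ k ∈ L, chi (condK K k t (unitInterval.symm (u k))) := by
    intro L
    have h1 : chi (t ∈ Aset K (q L)) = ∏ k, chi (condK K k t (q L k)) := by
      rw [chi_prod Finset.univ]; exact chi_congr (by simp [Aset, Set.mem_setOf_eq])
    rw [h1, ← Finset.prod_sdiff (Finset.subset_univ L)]
    congr 1
    · exact Finset.prod_congr rfl fun k hk => by
        rw [hq]; simp only [(Finset.mem_sdiff.mp hk).2, if_false]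
    · exact Finset.prod_congr rfl fun k hk => by rw [hq]; simp only [hk, if_true]
  calc ∑ L : Finset (Fin d), (-1:ℝ) ^ L.card * chi (t ∈ Aset K (q L))
      = ∑ L ∈ (Finset.univ : Finset (Fin d)).powerset, (-1:ℝ) ^ L.card *
          ((∏ k ∈ L, chi (condK K k t (unitInterval.symm (u k)))) *
            ∏ k ∈ Finset.univ \ L, chi (condK K k t 1)) := by
        rw [Finset.powerset_univ]
        exact Finset.sum_congr rfl fun L _ => by rw [hS L]; ring
    _ = ∏ k, (chi (condK K k t 1) - chi (condK K k t (unitInterval.symm (u k)))) :=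
        (prod_sub_expand Finset.univ _ _).symm
    _ = ∏ k, chi (condK Kᶜ k t (u k)) := by
        refine Finset.prod_congr rfl fun k _ => ?_
        rw [chi_sub (condK_mono unitInterval.le_one')]
        refine chi_congr ?_
        unfold condK
        by_cases hk : k ∈ K
        · rw [if_pos hk, if_pos hk, if_neg (by simp [hk])]
          rw [unitInterval.coe_symm_eq]
          constructor
          · rintro ⟨-, h2⟩
            have := not_lt.mp (by simpa using h2)
            linarith
          · intro h
            refine ⟨by simp [ht0'], by simp; linarith⟩
        · rw [if_neg hk, if_neg hk, if_pos (Finset.mem_compl.mpr hk)]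
          rw [unitInterval.coe_symm_eq]
          constructor
          · rintro ⟨-, h2⟩
            have := not_le.mp h2
            linarith
          · intro h
            refine ⟨by simpa using ht.2, by rw [not_le]; linarith⟩
    _ = chi (t ∈ Aset Kᶜ u) := by
        rw [chi_prod Finset.univ]; exact chi_congr (by simp [Aset, Set.mem_setOf_eq])

def fam (d : ℕ) : Finset (Finset (Fin d)) :=
  Finset.univ.filter (fun K : Finset (Fin d) => 1 ≤ K.card ∧ K.card ≤ d - 1)

lemma compl_nonempty {d : ℕ} {K : Finset (Fin d)} (h : K ≠ Finset.univ) : (Kᶜ).Nonempty := by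
  rw [← Finset.card_pos, Finset.card_compl]
  have h1 : K.card < Fintype.card (Fin d) :=
    Finset.card_lt_card (Finset.ssubset_univ_iff.mpr h)
  omega

lemma mem_fam {d : ℕ} (hd : 0 < d) {K : Finset (Fin d)} :
    K ∈ fam d ↔ K.Nonempty ∧ K ≠ Finset.univ := by
  simp only [fam, Finset.mem_filter, Finset.mem_univ, true_and]
  have hcard : K.card ≤ d := by
    have := Finset.card_le_univ K
    simpa using this
  constructor
  · rintro ⟨h1, h2⟩
    refine ⟨Finset.card_pos.mp h1, fun h => ?_⟩
    subst h
    rw [Finset.card_univ, Fintype.card_fin] at h2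
    omega
  · rintro ⟨h1, h2⟩
    refine ⟨Finset.card_pos.mpr h1, ?_⟩
    have hne : K.card ≠ d := fun h => by
      apply h2
      apply Finset.eq_univ_of_card
      rw [h, Fintype.card_fin]
    omega

lemma card_fam {d : ℕ} (hd : 0 < d) : (fam d).card = 2 ^ d - 2 := by
  have hne : Nonempty (Fin d) := ⟨⟨0, hd⟩⟩
  have h1 : fam d = Finset.univ \ {∅, Finset.univ} := by
    ext K
    rw [mem_fam hd]
    simp only [Finset.mem_sdiff, Finset.mem_univ, true_and, Finset.mem_insert,
      Finset.mem_singleton, Finset.nonempty_iff_ne_empty]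
    tauto
  have h2 : ({∅, Finset.univ} : Finset (Finset (Fin d))).card = 2 := by
    rw [Finset.card_insert_of_notMem (by
      simp only [Finset.mem_singleton]
      exact fun h => Finset.univ_nonempty.ne_empty h.symm), Finset.card_singleton]
  rw [h1, Finset.card_sdiff_of_subset (fun x _ => Finset.mem_univ x), h2, Finset.card_univ,
    Fintype.card_finset, Fintype.card_fin]

lemma compl_mem_fam {d : ℕ} (hd : 0 < d) {K : Finset (Fin d)} (h : K ∈ fam d) :
    Kᶜ ∈ fam d := by
  rw [mem_fam hd] at h ⊢
  obtain ⟨h1, h2⟩ := h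
  constructor
  · exact compl_nonempty h2
  · intro hc
    rw [Finset.compl_eq_univ_iff] at hc
    exact h1.ne_empty hc

lemma crossing {d : ℕ} {K K' : Finset (Fin d)} (h1 : K.Nonempty) (h2 : K ≠ Finset.univ)
    (h3 : K'.Nonempty) (h4 : K' ≠ Finset.univ) :
    ∃ x y, x ∈ K ∧ y ∉ K ∧ ((x ∈ K' ∧ y ∉ K') ∨ (y ∈ K' ∧ x ∉ K')) := by
  classical
  by_cases hB : (K \ K').Nonempty
  · by_cases hC : (K' \ K).Nonempty
    · obtain ⟨b, hb⟩ := hB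
      obtain ⟨c, hc⟩ := hC
      rw [Finset.mem_sdiff] at hb hc
      exact ⟨b, c, hb.1, hc.2, Or.inr ⟨hc.1, hb.2⟩⟩
    · have hK'K : K' ⊆ K := by
        intro a ha
        by_contra hna
        exact hC ⟨a, Finset.mem_sdiff.mpr ⟨ha, hna⟩⟩
      obtain ⟨x, hx⟩ := h3
      obtain ⟨y, hy⟩ := compl_nonempty h2
      have hyK : y ∉ K := Finset.mem_compl.mp hy
      exact ⟨x, y, hK'K hx, hyK, Or.inl ⟨hx, fun h => hyK (hK'K h)⟩⟩
  · have hKK' : K ⊆ K' := by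
      intro a ha
      by_contra hna
      exact hB ⟨a, Finset.mem_sdiff.mpr ⟨ha, hna⟩⟩
    obtain ⟨x, hx⟩ := h1
    obtain ⟨y, hy⟩ := compl_nonempty h4
    have hyK' : y ∉ K' := Finset.mem_compl.mp hy
    exact ⟨x, y, hx, fun h => hyK' (hKK' h), Or.inl ⟨hKK' hx, hyK'⟩⟩

noncomputable def dlt (n : ℕ) : ℝ := (1/4) / (n + 1)

lemma dlt_pos (n : ℕ) : 0 < dlt n := by
  unfold dlt; positivity

lemma dlt_le (n : ℕ) : dlt n ≤ 1/4 := by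
  unfold dlt
  apply div_le_self (by norm_num)
  have : (0:ℝ) ≤ n := Nat.cast_nonneg n
  linarith

lemma dlt_tendsto : Filter.Tendsto dlt Filter.atTop (nhds 0) := by
  have h : dlt = fun n : ℕ => (1/4 : ℝ) * (1 / (n + 1)) := by
    funext n; unfold dlt; ring
  rw [h]
  have := tendsto_one_div_add_atTop_nhds_zero_nat.const_mul (1/4 : ℝ)
  simpa using this

noncomputable def ptJ {d : ℕ} (J : Finset (Fin d)) : Cube d :=
  fun k => if k ∈ J then ⟨3/4, by norm_num⟩ else ⟨1/4, by norm_num⟩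

noncomputable def boxU {d : ℕ} (J : Finset (Fin d)) (n : ℕ) : Cube d :=
  fun k => if k ∈ J then ⟨3/4, by norm_num⟩
    else ⟨1/4 - dlt n, by
      constructor
      · have := dlt_le n; linarith
      · have := dlt_pos n; linarith⟩

noncomputable def boxV {d : ℕ} (J : Finset (Fin d)) (n : ℕ) : Cube d :=
  fun k => if k ∈ J then ⟨3/4 + dlt n, by
      constructor
      · have := dlt_pos n; linarith
      · have := dlt_le n; linarith⟩
    else ⟨1/4, by norm_num⟩

lemma boxU_le_boxV {d : ℕ} (J : Finset (Fin d)) (n : ℕ) : boxU J n ≤ boxV J n := by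
  intro k
  unfold boxU boxV
  by_cases hk : k ∈ J <;> simp only [hk, if_true, if_false] <;>
    apply Subtype.mk_le_mk.mpr <;> [skip; skip] <;> (have := dlt_pos n; linarith)

lemma Bset_box {d : ℕ} (hd : 0 < d) (J : Finset (Fin d)) (n : ℕ) :
    Bset J (boxU J n) (boxV J n) = Set.Ioc (1/4 - dlt n) (1/4 : ℝ) := by
  ext t
  simp only [Bset, Set.mem_setOf_eq, Set.mem_Ioc]
  constructor
  · intro h
    have h0 := h ⟨0, hd⟩
    by_cases hk : (⟨0, hd⟩ : Fin d) ∈ J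
    · obtain ⟨ha, hb⟩ := h0
      simp only [condK, boxU, boxV, hk, if_true] at ha hb
      rw [not_lt] at hb
      exact ⟨by linarith, by linarith⟩
    · obtain ⟨ha, hb⟩ := h0
      simp only [condK, boxU, boxV, hk, if_false] at ha hb
      rw [not_le] at hb
      exact ⟨by linarith, by linarith⟩
  · rintro ⟨h1, h2⟩ k
    by_cases hk : k ∈ J
    · constructor
      · simp only [condK, boxV, hk, if_true]; linarith
      · simp only [condK, boxU, hk, if_true, not_lt]; linarith
    · constructor
      · simp only [condK, boxV, hk, if_false]; linarith
      · simp only [condK, boxU, hk, if_false, not_le]; linarith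

lemma rho_Ioc_box (n : ℕ) :
    rho (Set.Ioc (1/4 - dlt n) (1/4 : ℝ)) = ENNReal.ofReal (dlt n) := by
  rw [rho_apply measurableSet_Ioc]
  have h : Set.Ioc (1/4 - dlt n) (1/4 : ℝ) ∩ Set.Icc 0 1 = Set.Ioc (1/4 - dlt n) (1/4 : ℝ) := by
    rw [Set.inter_eq_left]
    intro t ht
    have := dlt_le n
    exact ⟨by rcases ht with ⟨h1, _⟩; linarith, by rcases ht with ⟨_, h2⟩; linarith⟩
  rw [h, Real.volume_Ioc]
  congr 1
  ring


/-- For `d ≥ 3`, the copula `C = (1/(2^d - 2)) Σ_{1 ≤ |K| ≤ d-1} ν_K(M)` is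
Kendall-countermonotonic but not `K`-countermonotonic for any `K` with `2 ≤ |K| ≤ d`. -/
theorem stmt11 (d : ℕ) (hd : 3 ≤ d)
    (C : Cube d → ℝ)
    (hC : ∀ u : Cube d, C u = (1 / ((2 : ℝ) ^ d - 2)) *
      ∑ K ∈ Finset.univ.filter (fun K : Finset (Fin d) => 1 ≤ K.card ∧ K.card ≤ d - 1),
        nuK K Mcop u) :
    IsCopula C ∧ IsTauCM C ∧ ∀ K : Finset (Fin d), 2 ≤ K.card → ¬ IsKCM K C := by
  classical
  have hd0 : 0 < d := by omega
  set w : ℝ := (2:ℝ)^d - 2 with hw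
  have wpos : (0:ℝ) < w := by
    have h8 : (2:ℝ)^3 ≤ (2:ℝ)^d := pow_le_pow_right₀ (by norm_num) hd
    rw [hw]; norm_num at h8 ⊢; linarith
  have hw0 : w ≠ 0 := ne_of_gt wpos
  have CRep : ∀ u : Cube d, C u = (1 / w) * ∑ K ∈ fam d, (rho (Aset K u)).toReal := by
    intro u
    rw [hC u,
      show (Finset.univ.filter fun K : Finset (Fin d) => 1 ≤ K.card ∧ K.card ≤ d - 1) = fam d
        from rfl]
    congr 1
    exact Finset.sum_congr rfl fun K _ => nuK_eq hd0 K u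
  have Cnonneg : ∀ u : Cube d, 0 ≤ C u := by
    intro u
    rw [CRep u]
    exact mul_nonneg (by positivity) (Finset.sum_nonneg fun K _ => ENNReal.toReal_nonneg)
  have rectC : ∀ u v : Cube d, u ≤ v →
      ∑ J : Finset (Fin d), (-1:ℝ)^(d - J.card) * C (etaK J u v)
        = (1 / w) * ∑ K ∈ fam d, (rho (Bset K u v)).toReal := by
    intro u v huv
    have h1 : ∀ J : Finset (Fin d), (-1:ℝ)^(d - J.card) * C (etaK J u v)
        = (1 / w) * ∑ K ∈ fam d, (-1:ℝ)^(d - J.card) * (rho (Aset K (etaK J u v))).toReal := by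
      intro J
      calc (-1:ℝ)^(d - J.card) * C (etaK J u v)
          = (1 / w) * ((-1:ℝ)^(d - J.card) * ∑ K ∈ fam d, (rho (Aset K (etaK J u v))).toReal) := by
            rw [CRep]; ring
        _ = (1 / w) * ∑ K ∈ fam d, (-1:ℝ)^(d - J.card) * (rho (Aset K (etaK J u v))).toReal := by
            rw [Finset.mul_sum]
    rw [Finset.sum_congr rfl fun J _ => h1 J, ← Finset.mul_sum, Finset.sum_comm]
    congr 1
    exact Finset.sum_congr rfl fun K _ => rect_eq K u v huv
  have hrect : ∀ u v : Cube d, u ≤ v →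
      0 ≤ ∑ J : Finset (Fin d), (-1:ℝ)^(d - J.card) * C (etaK J u v) := by
    intro u v huv
    rw [rectC u v huv]
    exact mul_nonneg (by positivity) (Finset.sum_nonneg fun K _ => ENNReal.toReal_nonneg)
  have hii : ∀ (k : Fin d) (u : Cube d), C (etaK {k} u 0) = 0 := by
    intro k u
    rw [CRep]
    have hval : ((etaK {k} u 0 k : unitInterval) : ℝ) = 0 := by simp [etaK]
    have hz : ∀ K ∈ fam d, (rho (Aset K (etaK {k} u 0))).toReal = 0 := by
      intro K hK
      obtain ⟨hKne, hKuniv⟩ := (mem_fam hd0).mp hK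
      by_cases hk : k ∈ K
      · have hsub : Aset K (etaK {k} u 0) ⊆ Set.Ioi 1 := by
          intro t ht
          have h := ht k
          unfold condK at h
          rw [if_pos hk, hval] at h
          simp only [Set.mem_Ioi]
          linarith
        have h0 : rho (Aset K (etaK {k} u 0)) = 0 := by
          apply measure_mono_null hsub
          rw [rho_apply measurableSet_Ioi]
          have he : Set.Ioi (1:ℝ) ∩ Set.Icc 0 1 = ∅ := by
            ext t
            simp only [Set.mem_inter_iff, Set.mem_Ioi, Set.mem_Icc, Set.mem_empty_iff_false,
              iff_false, not_and]
            intro h1 h2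
            intro h3; linarith
          rw [he]; simp
        rw [h0]; simp
      · obtain ⟨k', hk'⟩ := hKne
        have hkk' : k' ≠ k := fun h => hk (h ▸ hk')
        have hval' : ((etaK {k} u 0 k' : unitInterval) : ℝ) = (u k' : ℝ) := by
          simp [etaK, hkk']
        have hsub : Aset K (etaK {k} u 0) ⊆ (∅ : Set ℝ) := by
          intro t ht
          have h1 := ht k
          have h2 := ht k'
          unfold condK at h1 h2
          rw [if_neg hk, hval] at h1
          rw [if_pos hk', hval'] at h2
          exfalso
          have := (u k').2.2
          linarith
        have h0 : rho (Aset K (etaK {k} u 0)) = 0 := by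
          apply measure_mono_null hsub
          simp
        rw [h0]; simp
    rw [Finset.sum_eq_zero hz, mul_zero]
  have hiii : ∀ (k : Fin d) (u : Cube d), C (etaK {k} 1 u) = (u k : ℝ) := by
    intro k u
    rw [CRep]
    have hval : ∀ j, ((etaK {k} 1 u j : unitInterval) : ℝ) = if j = k then (u j : ℝ) else 1 := by
      intro j
      by_cases hj : j = k
      · subst hj; simp [etaK]
      · simp [etaK, hj]
    have hterm : ∀ K ∈ fam d, (rho (Aset K (etaK {k} 1 u))).toReal = (u k : ℝ) := by
      intro K hK
      obtain ⟨hKne, hKuniv⟩ := (mem_fam hd0).mp hK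
      have hu0 : (0:ℝ) ≤ u k := (u k).2.1
      have hu1 : (u k:ℝ) ≤ 1 := (u k).2.2
      by_cases hk : k ∈ K
      · have hset : Aset K (etaK {k} 1 u) ∩ Set.Icc 0 1 = Set.Ioc (1 - (u k:ℝ)) 1 := by
          ext t
          simp only [Set.mem_inter_iff, Set.mem_Icc, Set.mem_Ioc, Aset, Set.mem_setOf_eq]
          constructor
          · rintro ⟨hA, h0, h1⟩
            have h := hA k
            unfold condK at h
            rw [if_pos hk, hval k, if_pos rfl] at h
            exact ⟨h, h1⟩
          · rintro ⟨hlo, hhi⟩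
            refine ⟨fun j => ?_, by linarith, hhi⟩
            unfold condK
            by_cases hjK : j ∈ K
            · rw [if_pos hjK, hval j]
              by_cases hj : j = k
              · rw [if_pos hj, hj]; exact hlo
              · rw [if_neg hj]; linarith
            · rw [if_neg hjK, hval j, if_neg (fun h => hjK (show j ∈ K by rw [h]; exact hk))]
              exact hhi
        rw [rho_apply (measurableSet_Aset K _), hset, Real.volume_Ioc,
          show (1:ℝ) - (1 - (u k:ℝ)) = (u k:ℝ) by ring, ENNReal.toReal_ofReal hu0]
      · obtain ⟨k', hk'⟩ := hKne
        have hkk' : k' ≠ k := fun h => hk (h ▸ hk')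
        have hset : Aset K (etaK {k} 1 u) ∩ Set.Icc 0 1 = Set.Ioc 0 (u k:ℝ) := by
          ext t
          simp only [Set.mem_inter_iff, Set.mem_Icc, Set.mem_Ioc, Aset, Set.mem_setOf_eq]
          constructor
          · rintro ⟨hA, h0, h1⟩
            have hA_k := hA k
            unfold condK at hA_k
            rw [if_neg hk, hval k, if_pos rfl] at hA_k
            have hA_k' := hA k'
            unfold condK at hA_k'
            rw [if_pos hk', hval k', if_neg hkk'] at hA_k'
            exact ⟨by linarith, hA_k⟩
          · rintro ⟨hlo, hhi⟩
            refine ⟨fun j => ?_, le_of_lt hlo, by linarith⟩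
            unfold condK
            by_cases hjK : j ∈ K
            · rw [if_pos hjK, hval j, if_neg (fun h => hk (show k ∈ K by rw [← h]; exact hjK))]
              linarith
            · rw [if_neg hjK, hval j]
              by_cases hj : j = k
              · rw [if_pos hj, hj]; exact hhi
              · rw [if_neg hj]; linarith
        rw [rho_apply (measurableSet_Aset K _), hset, Real.volume_Ioc,
          show (u k:ℝ) - 0 = (u k:ℝ) by ring, ENNReal.toReal_ofReal hu0]
    rw [Finset.sum_congr rfl hterm, Finset.sum_const, card_fam hd0, nsmul_eq_mul]
    have hcast : ((2^d - 2 : ℕ) : ℝ) = w := by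
      have h2 : 2 ≤ 2^d := by
        calc 2 = 2^1 := by norm_num
          _ ≤ 2^d := Nat.pow_le_pow_right (by norm_num) (by omega)
      rw [hw, Nat.cast_sub h2]
      push_cast
      ring
    rw [hcast, ← mul_assoc, one_div, inv_mul_cancel₀ hw0, one_mul]
  -- survival C = C
  have hsurv : ∀ u : Cube d, survival C u = C u := by
    intro u
    rw [survival, nuK, Finset.powerset_univ]
    have hqe : ∀ L : Finset (Fin d),
        (fun k => if k ∈ L then unitInterval.symm (u k)
          else if k ∈ (Finset.univ : Finset (Fin d)) then 1 else u k)
          = (fun k => if k ∈ L then unitInterval.symm (u k) else 1) := by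
      intro L; funext k; by_cases hk : k ∈ L <;> simp [hk]
    calc ∑ L : Finset (Fin d), (-1:ℝ)^L.card *
          C (fun k => if k ∈ L then unitInterval.symm (u k)
              else if k ∈ (Finset.univ : Finset (Fin d)) then 1 else u k)
        = ∑ L : Finset (Fin d), (1 / w) * ∑ K ∈ fam d, (-1:ℝ)^L.card *
            (rho (Aset K (fun k => if k ∈ L then unitInterval.symm (u k) else 1))).toReal := by
          refine Finset.sum_congr rfl fun L _ => ?_
          rw [hqe L, CRep]
          rw [← mul_assoc, mul_comm ((-1:ℝ)^L.card) (1/w), mul_assoc, Finset.mul_sum]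
      _ = (1 / w) * ∑ L : Finset (Fin d), ∑ K ∈ fam d, (-1:ℝ)^L.card *
            (rho (Aset K (fun k => if k ∈ L then unitInterval.symm (u k) else 1))).toReal := by
          rw [← Finset.mul_sum]
      _ = (1 / w) * ∑ K ∈ fam d, ∑ L : Finset (Fin d), (-1:ℝ)^L.card *
            (rho (Aset K (fun k => if k ∈ L then unitInterval.symm (u k) else 1))).toReal := by
          rw [Finset.sum_comm]
      _ = (1 / w) * ∑ K ∈ fam d, (rho (Aset Kᶜ u)).toReal := by
          congr 1
          exact Finset.sum_congr rfl fun K _ => survsum_eq K u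
      _ = (1 / w) * ∑ K ∈ fam d, (rho (Aset K u)).toReal := by
          congr 1
          refine Finset.sum_nbij' (fun K => Kᶜ) (fun K => Kᶜ) ?_ ?_ ?_ ?_ ?_
          · intro K hK; exact compl_mem_fam hd0 hK
          · intro K hK; exact compl_mem_fam hd0 hK
          · intro K _; exact compl_compl K
          · intro K _; exact compl_compl K
          · intro K _; rfl
      _ = C u := (CRep u).symm
  -- witnesses from positivity
  have hwit : ∀ x : Cube d, 0 < C x →
      ∃ K : Finset (Fin d), (K.Nonempty ∧ K ≠ Finset.univ) ∧ ∃ t : ℝ, ∀ j, condK K j t (x j) := by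
    intro x hx
    by_contra hcon
    push_neg at hcon
    have hzero : ∀ K ∈ fam d, (rho (Aset K x)).toReal = 0 := by
      intro K hK
      obtain ⟨h1, h2⟩ := (mem_fam hd0).mp hK
      have hcK := hcon K ⟨h1, h2⟩
      have hemp : Aset K x = ∅ := by
        rw [Set.eq_empty_iff_forall_notMem]
        intro t ht
        obtain ⟨j, hj⟩ := hcK t
        exact hj (ht j)
      rw [hemp]; simp
    rw [CRep, Finset.sum_eq_zero hzero, mul_zero] at hx
    exact lt_irrefl _ hx
  have htau : IsTauCM C := by
    intro u _
    rw [hsurv]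
    set x : Cube d := fun k => unitInterval.symm (u k) with hx
    have key : ¬ (0 < C u ∧ 0 < C x) := by
      rintro ⟨ha, hb⟩
      obtain ⟨K, ⟨hK1, hK2⟩, t, hT⟩ := hwit u ha
      obtain ⟨K', ⟨hK1', hK2'⟩, t', hT'⟩ := hwit x hb
      obtain ⟨a, b, haK, hbK, hcase⟩ := crossing hK1 hK2 hK1' hK2'
      have h1 : 1 - (u a:ℝ) < t := by
        have := hT a; unfold condK at this; rwa [if_pos haK] at this
      have h2 : t ≤ (u b:ℝ) := by
        have := hT b; unfold condK at this; rwa [if_neg hbK] at this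
      have hxa : (x a:ℝ) = 1 - (u a:ℝ) := by rw [hx]; exact unitInterval.coe_symm_eq _
      have hxb : (x b:ℝ) = 1 - (u b:ℝ) := by rw [hx]; exact unitInterval.coe_symm_eq _
      rcases hcase with ⟨haK', hbK'⟩ | ⟨hbK', haK'⟩
      · have h3 : 1 - (x a:ℝ) < t' := by
          have := hT' a; unfold condK at this; rwa [if_pos haK'] at this
        have h4 : t' ≤ (x b:ℝ) := by
          have := hT' b; unfold condK at this; rwa [if_neg hbK'] at this
        rw [hxa] at h3; rw [hxb] at h4
        linarith
      · have h3 : 1 - (x b:ℝ) < t' := by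
          have := hT' b; unfold condK at this; rwa [if_pos hbK'] at this
        have h4 : t' ≤ (x a:ℝ) := by
          have := hT' a; unfold condK at this; rwa [if_neg haK'] at this
        rw [hxb] at h3; rw [hxa] at h4
        linarith
    have ha := Cnonneg u
    have hb := Cnonneg x
    rcases eq_or_lt_of_le ha with h | h
    · rw [← h]; exact min_eq_left hb
    · have hb0 : C x = 0 := by
        rcases eq_or_lt_of_le hb with h' | h'
        · exact h'.symm
        · exact absurd ⟨h, h'⟩ key
      rw [hb0]; exact min_eq_right (by linarith)
  refine ⟨⟨hrect, hii, hiii⟩, htau, ?_⟩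
  -- Part 3
  intro K hK2 hKCM
  obtain ⟨g, c, hg, μ, ⟨hμP, hμC⟩, hμS⟩ := hKCM
  haveI := hμP
  obtain ⟨k₀, hk₀, k₁, hk₁, hne⟩ := Finset.one_lt_card.mp (by omega : 1 < K.card)
  have main : ∀ J ∈ fam d, ∑ k ∈ K, g k (ptJ J k) = c := by
    intro J hJ
    have hyex : ∀ n : ℕ, ∃ y : Cube d,
        y ∈ BoxSet (boxU J n) (boxV J n) ∧ ∑ k ∈ K, g k (y k) = c := by
      intro n
      have hle := boxU_le_boxV J n
      have hbox : (μ (BoxSet (boxU J n) (boxV J n))).toReal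
          = (1 / w) * ∑ K' ∈ fam d, (rho (Bset K' (boxU J n) (boxV J n))).toReal := by
        rw [← box_eq μ _ _ hle, ← rectC _ _ hle]
        refine Finset.sum_congr rfl fun J' _ => ?_
        rw [hμC, ENNReal.toReal_ofReal (Cnonneg _)]
      have hge : (1 / w) * dlt n ≤ (μ (BoxSet (boxU J n) (boxV J n))).toReal := by
        rw [hbox]
        have hterm : (rho (Bset J (boxU J n) (boxV J n))).toReal = dlt n := by
          rw [Bset_box hd0 J n, rho_Ioc_box n, ENNReal.toReal_ofReal (dlt_pos n).le]
        calc (1/w) * dlt n = (1/w) * (rho (Bset J (boxU J n) (boxV J n))).toReal := by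
              rw [hterm]
          _ ≤ _ := by
              apply mul_le_mul_of_nonneg_left _ (by positivity)
              exact Finset.single_le_sum (f := fun K' => (rho (Bset K' (boxU J n) (boxV J n))).toReal) (fun K' _ => ENNReal.toReal_nonneg) hJ
      have hpos : μ (BoxSet (boxU J n) (boxV J n)) ≠ 0 := by
        intro h0
        rw [h0] at hge
        simp only [ENNReal.toReal_zero] at hge
        have hdp := dlt_pos n
        have : 0 < (1/w) * dlt n := by positivity
        linarith
      by_contra hcon
      push_neg at hcon
      have hdisj : Disjoint {y : Cube d | ∑ k ∈ K, g k (y k) = c}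
          (BoxSet (boxU J n) (boxV J n)) := by
        rw [Set.disjoint_left]
        intro y hyS hyB
        exact hcon y hyB hyS
      have hunion := measure_union hdisj (measurableSet_BoxSet (boxU J n) (boxV J n)) (μ := μ)
      have hle1 : μ ({y : Cube d | ∑ k ∈ K, g k (y k) = c} ∪ BoxSet (boxU J n) (boxV J n)) ≤ 1 :=
        prob_le_one
      rw [hunion, hμS] at hle1
      exact absurd hle1 (not_le.mpr (ENNReal.lt_add_right ENNReal.one_ne_top hpos))
    choose y hy1 hy2 using hyex
    have hty : Filter.Tendsto y Filter.atTop (nhds (ptJ J)) := by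
      rw [tendsto_pi_nhds]
      intro k
      rw [tendsto_subtype_rng]
      by_cases hk : k ∈ J
      · have hpt : ((ptJ J k : unitInterval) : ℝ) = 3/4 := by simp [ptJ, hk]
        rw [hpt]
        have hlim : Filter.Tendsto (fun n : ℕ => (3/4 : ℝ) + dlt n) Filter.atTop (nhds (3/4)) := by
          have := (tendsto_const_nhds (x := (3/4:ℝ)) (f := Filter.atTop (α := ℕ))).add dlt_tendsto
          simpa using this
        refine tendsto_of_tendsto_of_tendsto_of_le_of_le
          (tendsto_const_nhds (x := (3/4:ℝ))) hlim ?_ ?_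
        · intro n
          have := (hy1 n k).2
          simp only [BoxSet, boxU, hk, if_true, not_le] at this
          exact le_of_lt this
        · intro n
          have := (hy1 n k).1
          simpa [boxV, hk] using this
      · have hpt : ((ptJ J k : unitInterval) : ℝ) = 1/4 := by simp [ptJ, hk]
        rw [hpt]
        have hlim : Filter.Tendsto (fun n : ℕ => (1/4 : ℝ) - dlt n) Filter.atTop (nhds (1/4)) := by
          have := (tendsto_const_nhds (x := (1/4:ℝ)) (f := Filter.atTop (α := ℕ))).sub dlt_tendsto
          simpa using this
        refine tendsto_of_tendsto_of_tendsto_of_le_of_le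
          hlim (tendsto_const_nhds (x := (1/4:ℝ))) ?_ ?_
        · intro n
          have := (hy1 n k).2
          simp only [BoxSet, boxU, hk, if_false, not_le] at this
          exact le_of_lt this
        · intro n
          have := (hy1 n k).1
          simpa [boxV, hk] using this
    have hGcont : Continuous (fun z : Cube d => ∑ k ∈ K, g k (z k)) :=
      continuous_finset_sum _ fun k hk => ((hg k hk).2).comp (continuous_apply k)
    have hGc := (hGcont.tendsto (ptJ J)).comp hty
    have hconst : (fun n => ∑ k ∈ K, g k (y n k)) = fun _ => c := funext fun n => hy2 n
    rw [show ((fun z : Cube d => ∑ k ∈ K, g k (z k)) ∘ y) = fun n => ∑ k ∈ K, g k (y n k)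
      from rfl, hconst] at hGc
    exact tendsto_nhds_unique hGc tendsto_const_nhds
  have hJ1 : ({k₀} : Finset (Fin d)) ∈ fam d := by
    rw [mem_fam hd0]
    refine ⟨Finset.singleton_nonempty k₀, fun h => ?_⟩
    have hcard := congrArg Finset.card h
    rw [Finset.card_singleton, Finset.card_univ, Fintype.card_fin] at hcard
    omega
  have hJ2 : ({k₀, k₁} : Finset (Fin d)) ∈ fam d := by
    rw [mem_fam hd0]
    refine ⟨Finset.insert_nonempty _ _, fun h => ?_⟩
    have hcard := congrArg Finset.card h
    rw [Finset.card_insert_of_notMem (by simp [hne]), Finset.card_singleton,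
      Finset.card_univ, Fintype.card_fin] at hcard
    omega
  have hs1 := main _ hJ1
  have hs2 := main _ hJ2
  have hdiff : ∑ k ∈ K, (g k (ptJ ({k₀, k₁} : Finset (Fin d)) k)
      - g k (ptJ ({k₀} : Finset (Fin d)) k)) = 0 := by
    rw [Finset.sum_sub_distrib, hs1, hs2, sub_self]
  have hsum := Finset.sum_eq_single_of_mem (s := K)
    (f := fun k => g k (ptJ ({k₀, k₁} : Finset (Fin d)) k)
      - g k (ptJ ({k₀} : Finset (Fin d)) k)) k₁ hk₁ (fun b _ hbne => by
      have hpt : ptJ ({k₀, k₁} : Finset (Fin d)) b = ptJ ({k₀} : Finset (Fin d)) b := by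
        unfold ptJ
        by_cases hb0 : b = k₀
        · simp [hb0]
        · have hb1 : b ∉ ({k₀, k₁} : Finset (Fin d)) := by
            simp [Finset.mem_insert, Finset.mem_singleton, hb0, hbne]
          have hb2 : b ∉ ({k₀} : Finset (Fin d)) := by simp [hb0]
          rw [if_neg hb1, if_neg hb2]
      simp only [hpt, sub_self])
  have hsingle : g k₁ (ptJ ({k₀, k₁} : Finset (Fin d)) k₁)
      - g k₁ (ptJ ({k₀} : Finset (Fin d)) k₁) = 0 := hsum.symm.trans hdiff
  have hmem2 : k₁ ∈ ({k₀, k₁} : Finset (Fin d)) := by simp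
  have hmem1 : k₁ ∉ ({k₀} : Finset (Fin d)) := by simp [hne.symm]
  have hval2 : ptJ ({k₀, k₁} : Finset (Fin d)) k₁ = ⟨3/4, by norm_num⟩ := by
    unfold ptJ; rw [if_pos hmem2]
  have hval1 : ptJ ({k₀} : Finset (Fin d)) k₁ = ⟨1/4, by norm_num⟩ := by
    unfold ptJ; rw [if_neg hmem1]
  rw [hval2, hval1] at hsingle
  have hlt : ((⟨1/4, by norm_num⟩ : unitInterval)) < ⟨3/4, by norm_num⟩ := by
    rw [Subtype.mk_lt_mk]; norm_num
  have := (hg k₁ hk₁).1 hlt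
  linarith
end

section
/- Let 𝒟 be a nonempty compact set of d-dimensional copulas. Then (𝒟,⪯) is coverable from below: for every D ∈ 𝒟 there exists C ∈ 𝒟 such that C ⪯ D and C is a minimal element of (𝒟,⪯) (i.e., for every E ∈ 𝒟, E ⪯ C implies E = C). In particular, for every copula D there exists a minimal copula C with C ⪯ D. -/
open MeasureTheory unitInterval

/-- `κ` is continuous: `κ (Cₙ) → κ C` whenever copulas `Cₙ` converge uniformly to a copula `C`. -/
def ContinuousFunctional {d : ℕ} (κ : (Cube d → ℝ) → ℝ) : Prop :=
  ∀ (Cs : ℕ → Cube d → ℝ) (C : Cube d → ℝ), (∀ n, IsCopula (Cs n)) → IsCopula C →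
    TendstoUniformly Cs C Filter.atTop →
    Filter.Tendsto (fun n => κ (Cs n)) Filter.atTop (nhds (κ C))

/-- `κ` is concordance order preserving. -/
def ConcPreserving {d : ℕ} (κ : (Cube d → ℝ) → ℝ) : Prop :=
  ∀ C D : Cube d → ℝ, IsCopula C → IsCopula D → ConcLE C D → κ C ≤ κ D

/-- `κ` is strictly concordance order preserving. -/
def StrictConcPreserving {d : ℕ} (κ : (Cube d → ℝ) → ℝ) : Prop :=
  ConcPreserving κ ∧
  ∀ C D : Cube d → ℝ, IsCopula C → IsCopula D → ConcLE C D → C ≠ D → κ C < κ D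

/-- `m(κ,𝒟)`: the set of all `D ∈ 𝒟` with `κ D = inf_{C ∈ 𝒟} κ C`. -/
noncomputable def MinSet {d : ℕ} (κ : (Cube d → ℝ) → ℝ) (𝒟 : Set (Cube d → ℝ)) :
    Set (Cube d → ℝ) :=
  {D ∈ 𝒟 | κ D = sInf (κ '' 𝒟)}

/-! Both statements follow from Zorn's lemma for the concordance order, once every chain has a
lower bound. In a compact set `𝒟` the sets `{C ∈ 𝒟 | C ⪯ E}`, `E` in the chain, are closed and
directed, so by Cantor's intersection theorem they have a common point. Among all copulas, the
pointwise infimum of the chain is a lower bound: the chain is directed, so finitely many values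
of the infimum are approximated simultaneously by a single member of the chain, and both the
rectangle inequality and `τ C ≤ τ E` only involve finitely many values of `C`. -/

section ConcordanceOrder

variable {d : ℕ}

theorem ConcLE.refl (C : Cube d → ℝ) : ConcLE C C := ⟨fun _ => le_rfl, fun _ => le_rfl⟩

theorem ConcLE.trans {A B C : Cube d → ℝ} (hAB : ConcLE A B) (hBC : ConcLE B C) : ConcLE A C :=
  ⟨fun u => (hAB.1 u).trans (hBC.1 u), fun u => (hAB.2 u).trans (hBC.2 u)⟩

theorem ConcLE.antisymm {A B : Cube d → ℝ} (hAB : ConcLE A B) (hBA : ConcLE B A) : A = B :=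
  funext fun u => le_antisymm (hAB.1 u) (hBA.1 u)

theorem IsChain.exists_concLE_concLE {c : Set (Cube d → ℝ)} (hc : IsChain ConcLE c)
    {E F : Cube d → ℝ} (hE : E ∈ c) (hF : F ∈ c) : ∃ G ∈ c, ConcLE G E ∧ ConcLE G F := by
  rcases eq_or_ne E F with rfl | hEF
  · exact ⟨E, hE, ConcLE.refl E, ConcLE.refl E⟩
  rcases hc hE hF hEF with h | h
  exacts [⟨E, hE, ConcLE.refl E, h⟩, ⟨F, hF, h, ConcLE.refl F⟩]

theorem exists_minimal_concLE_of_chains_bounded {S : Set (Cube d → ℝ)}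
    (hS : ∀ c ⊆ S, IsChain ConcLE c → c.Nonempty → ∃ C ∈ S, ∀ E ∈ c, ConcLE C E)
    {D : Cube d → ℝ} (hD : D ∈ S) :
    ∃ C ∈ S, ConcLE C D ∧ ∀ E ∈ S, ConcLE E C → E = C := by
  let T := {C : Cube d → ℝ // C ∈ S ∧ ConcLE C D}
  have : Nonempty T := ⟨⟨D, hD, ConcLE.refl D⟩⟩
  have hT : ∀ ch : Set T, IsChain (fun a b : T => ConcLE b.1 a.1) ch → ch.Nonempty →
      ∃ C : T, ∀ a ∈ ch, ConcLE C.1 a.1 := by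
    rintro ch hch ⟨a₀, ha₀⟩
    have hchain : IsChain ConcLE (Subtype.val '' ch) := by
      rintro _ ⟨a, ha, rfl⟩ _ ⟨b, hb, rfl⟩ hab
      exact (hch ha hb (ne_of_apply_ne _ hab)).symm
    obtain ⟨C, hCS, hC⟩ :=
      hS _ (by rintro _ ⟨a, -, rfl⟩; exact a.2.1) hchain ⟨a₀.1, a₀, ha₀, rfl⟩
    exact ⟨⟨C, hCS, (hC _ ⟨a₀, ha₀, rfl⟩).trans a₀.2.2⟩, fun a ha => hC _ ⟨a, ha, rfl⟩⟩
  obtain ⟨m, hm⟩ := exists_maximal_of_nonempty_chains_bounded hT fun h₁ h₂ => h₂.trans h₁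
  exact ⟨m.1, m.2.1, m.2.2, fun E hE hEm => hEm.antisymm (hm ⟨E, hE, hEm.trans m.2.2⟩ hEm)⟩

theorem isClosed_setOf_concLE (E : Cube d → ℝ) :
    IsClosed {f : UniformFun (Cube d) ℝ | ConcLE (UniformFun.toFun f) E} := by
  have hev (u : Cube d) : Continuous fun f : UniformFun (Cube d) ℝ => UniformFun.toFun f u :=
    (UniformFun.uniformContinuous_eval ℝ u).continuous
  have hsurv (u : Cube d) :
      Continuous fun f : UniformFun (Cube d) ℝ => survival (UniformFun.toFun f) u := by
    simp only [survival, nuK]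
    exact continuous_finsetSum _ fun L _ => continuous_const.mul (hev _)
  simp only [ConcLE, Set.ofPred_and, Set.ofPred_forall]
  exact (isClosed_iInter fun u => isClosed_le (hev u) continuous_const).inter
    (isClosed_iInter fun u => isClosed_le (hsurv u) continuous_const)

theorem IsCompact.exists_concLE_of_isChain {𝒟 c : Set (Cube d → ℝ)}
    (h𝒟 : IsCompact (UniformFun.ofFun '' 𝒟 : Set (UniformFun (Cube d) ℝ)))
    (hc𝒟 : c ⊆ 𝒟) (hc : IsChain ConcLE c) (hne : c.Nonempty) :
    ∃ C ∈ 𝒟, ∀ E ∈ c, ConcLE C E := by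
  have : Nonempty c := hne.to_subtype
  let t (E : c) : Set (UniformFun (Cube d) ℝ) :=
    UniformFun.ofFun '' 𝒟 ∩ {f | ConcLE (UniformFun.toFun f) E}
  have htd : Directed (· ⊇ ·) t := by
    intro E F
    obtain ⟨G, hG, hGE, hGF⟩ := hc.exists_concLE_concLE E.2 F.2
    exact ⟨⟨G, hG⟩, fun f hf => ⟨hf.1, hf.2.trans hGE⟩, fun f hf => ⟨hf.1, hf.2.trans hGF⟩⟩
  have htn (E : c) : (t E).Nonempty :=
    ⟨UniformFun.ofFun E, ⟨E, hc𝒟 E.2, rfl⟩, ConcLE.refl E.1⟩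
  obtain ⟨f, hf⟩ := IsCompact.nonempty_iInter_of_directed_nonempty_isCompact_isClosed t htd htn
    (fun E => h𝒟.inter_right (isClosed_setOf_concLE E.1))
    (fun E => h𝒟.isClosed.inter (isClosed_setOf_concLE E.1))
  obtain ⟨C, hC, rfl⟩ := (Set.mem_iInter.1 hf ⟨_, hne.some_mem⟩).1
  exact ⟨C, hC, fun E hE => (Set.mem_iInter.1 hf ⟨E, hE⟩).2⟩

end ConcordanceOrder

section ChainInfimum

open Filter Topology

variable {d : ℕ}

theorem IsCopula.nonneg {C : Cube d → ℝ} (hC : IsCopula C) (u : Cube d) : 0 ≤ C u := by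
  have hbox : ∑ K : Finset (Fin d), (-1 : ℝ) ^ (d - K.card) * C (etaK K 0 u) = C u := by
    rw [Finset.sum_eq_single_of_mem Finset.univ (Finset.mem_univ _)]
    · have hu : etaK Finset.univ 0 u = u := funext fun k => by simp [etaK]
      rw [hu, Finset.card_univ, Fintype.card_fin, Nat.sub_self, pow_zero, one_mul]
    · intro K _ hK
      obtain ⟨j, hj⟩ : ∃ j, j ∉ K := by simpa [Finset.eq_univ_iff_forall] using hK
      have hzero : etaK K 0 u = etaK {j} (etaK K 0 u) 0 := by
        funext k
        by_cases hk : k = j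
        · subst hk; simp [etaK, hj]
        · simp [etaK, hk]
      rw [hzero, hC.2.1 j _, mul_zero]
  exact hbox ▸ hC.1 0 u fun _ => unitInterval.nonneg'

theorem bddBelow_of_isCopula {c : Set (Cube d → ℝ)} (hc : ∀ E ∈ c, IsCopula E) :
    BddBelow c :=
  ⟨0, fun E hE u => (hc E hE).nonneg u⟩

theorem IsChain.exists_concLE_lt_sInf_add {c : Set (Cube d → ℝ)} (hc : IsChain ConcLE c)
    {E₀ : Cube d → ℝ} (hE₀ : E₀ ∈ c) (P : Finset (Cube d)) {ε : ℝ}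
    (hε : 0 < ε) : ∃ E ∈ c, ConcLE E E₀ ∧ ∀ p ∈ P, E p < sInf c p + ε := by
  classical
  induction P using Finset.induction with
  | empty => exact ⟨E₀, hE₀, ConcLE.refl E₀, by simp⟩
  | insert a P _ ih =>
    obtain ⟨E, hE, hEE₀, hEP⟩ := ih
    have hlt : sInf ((fun F : Cube d → ℝ => F a) '' c) < sInf c a + ε := by
      rw [← sInf_apply_eq_sInf_image]; linarith
    obtain ⟨_, ⟨F, hF, rfl⟩, hFa⟩ := exists_lt_of_csInf_lt (Set.Nonempty.image _ ⟨E₀, hE₀⟩) hlt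
    obtain ⟨G, hG, hGE, hGF⟩ := hc.exists_concLE_concLE hE hF
    refine ⟨G, hG, hGE.trans hEE₀, fun p hp => ?_⟩
    rcases Finset.mem_insert.1 hp with rfl | hp
    exacts [(hGF.1 p).trans_lt hFa, (hGE.1 p).trans_lt (hEP p hp)]

theorem IsChain.exists_seq_tendsto_sum_sInf {c : Set (Cube d → ℝ)} (hc : IsChain ConcLE c)
    (hbdd : BddBelow c) {E₀ : Cube d → ℝ} (hE₀ : E₀ ∈ c) {ι : Type*} (s : Finset ι)
    (a : ι → ℝ) (p : ι → Cube d) :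
    ∃ E : ℕ → Cube d → ℝ, (∀ n, E n ∈ c ∧ ConcLE (E n) E₀) ∧
      Tendsto (fun n => ∑ i ∈ s, a i * E n (p i)) atTop (𝓝 (∑ i ∈ s, a i * sInf c (p i))) := by
  classical
  choose E hEc hEE₀ hEp using fun n : ℕ =>
    hc.exists_concLE_lt_sInf_add hE₀ (s.image p) (Nat.one_div_pos_of_nat (n := n))
  refine ⟨E, fun n => ⟨hEc n, hEE₀ n⟩, tendsto_finsetSum _ fun i hi => ?_⟩
  have hupper : Tendsto (fun n : ℕ => sInf c (p i) + 1 / ((n : ℝ) + 1)) atTop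
      (𝓝 (sInf c (p i))) := by
    simpa using tendsto_one_div_add_atTop_nhds_zero_nat.const_add (sInf c (p i))
  exact (tendsto_of_tendsto_of_tendsto_of_le_of_le tendsto_const_nhds hupper
    (fun n => csInf_le hbdd (hEc n) (p i))
    (fun n => (hEp n _ (Finset.mem_image_of_mem p hi)).le)).const_mul (a i)

theorem IsChain.sInf_concLE {c : Set (Cube d → ℝ)} (hc : IsChain ConcLE c) (hbdd : BddBelow c)
    {E : Cube d → ℝ} (hE : E ∈ c) : ConcLE (sInf c) E := by
  refine ⟨fun u => csInf_le hbdd hE u, fun u => ?_⟩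
  obtain ⟨F, hF, hlim⟩ := hc.exists_seq_tendsto_sum_sInf hbdd hE Finset.univ.powerset
    (fun L => (-1 : ℝ) ^ L.card)
    (fun L k => if k ∈ L then unitInterval.symm (u k) else if k ∈ Finset.univ then 1 else u k)
  exact le_of_tendsto' hlim fun n => (hF n).2.2 u

theorem IsChain.isCopula_sInf {c : Set (Cube d → ℝ)} (hc : IsChain ConcLE c)
    (hcop : ∀ E ∈ c, IsCopula E) (hne : c.Nonempty) : IsCopula (sInf c) := by
  obtain ⟨E₀, hE₀⟩ := hne
  have hbdd := bddBelow_of_isCopula hcop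
  have hconst (p : Cube d) (w : ℝ) (hw : ∀ E ∈ c, E p = w) : sInf c p = w := by
    refine le_antisymm ((csInf_le hbdd hE₀ p).trans_eq (hw E₀ hE₀)) ?_
    rw [sInf_apply_eq_sInf_image]
    exact le_csInf ⟨E₀ p, E₀, hE₀, rfl⟩ (by rintro _ ⟨E, hE, rfl⟩; exact (hw E hE).ge)
  refine ⟨fun u v huv => ?_, fun k u => hconst _ _ fun E hE => (hcop E hE).2.1 k u,
    fun k u => hconst _ _ fun E hE => (hcop E hE).2.2 k u⟩
  obtain ⟨E, hE, hlim⟩ := hc.exists_seq_tendsto_sum_sInf hbdd hE₀ Finset.univ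
    (fun K => (-1 : ℝ) ^ (d - K.card)) (fun K => etaK K u v)
  exact ge_of_tendsto' hlim fun n => (hcop _ (hE n).1).1 u v huv

end ChainInfimum

theorem stmt12_general (d : ℕ) (𝒟 : Set (Cube d → ℝ))
    (h𝒟cpt : IsCompact (UniformFun.ofFun '' 𝒟 : Set (UniformFun (Cube d) ℝ))) :
    (∀ D ∈ 𝒟, ∃ C ∈ 𝒟, ConcLE C D ∧ ∀ E ∈ 𝒟, ConcLE E C → E = C) ∧
    (∀ D : Cube d → ℝ, IsCopula D → ∃ C : Cube d → ℝ, IsMinimalCopula C ∧ ConcLE C D) := by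
  refine ⟨fun D hD => exists_minimal_concLE_of_chains_bounded
    (fun c hc𝒟 hc hne => h𝒟cpt.exists_concLE_of_isChain hc𝒟 hc hne) hD, fun D hD => ?_⟩
  obtain ⟨C, hC, hCD, hCmin⟩ := exists_minimal_concLE_of_chains_bounded (S := {C | IsCopula C})
    (fun c hcop hc hne => ⟨sInf c, hc.isCopula_sInf hcop hne,
      fun E hE => hc.sInf_concLE (bddBelow_of_isCopula hcop) hE⟩) hD
  exact ⟨C, ⟨hC, hCmin⟩, hCD⟩

/-- Every nonempty compact (w.r.t. the topology of uniform convergence, i.e. the supremum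
metric) set of copulas is coverable from below; in particular, below every copula there is
a minimal copula. -/
theorem stmt12 (d : ℕ) (hd : 2 ≤ d) (𝒟 : Set (Cube d → ℝ))
    (h𝒟cop : ∀ C ∈ 𝒟, IsCopula C) (h𝒟ne : 𝒟.Nonempty)
    (h𝒟cpt : IsCompact (UniformFun.ofFun '' 𝒟 : Set (UniformFun (Cube d) ℝ))) :
    (∀ D ∈ 𝒟, ∃ C ∈ 𝒟, ConcLE C D ∧ ∀ E ∈ 𝒟, ConcLE E C → E = C) ∧
    (∀ D : Cube d → ℝ, IsCopula D → ∃ C : Cube d → ℝ, IsMinimalCopula C ∧ ConcLE C D) :=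
  stmt12_general d 𝒟 h𝒟cpt
end

section
/- Let κ be a continuous and strictly concordance order preserving functional on d-dimensional copulas and let 𝒟 be a nonempty compact set of copulas. Then m(κ,𝒟) is nonempty and every element of m(κ,𝒟) is a minimal element of (𝒟,⪯); in particular, m(κ,𝒞), the set of minimizers of κ over all d-dimensional copulas, is a nonempty set consisting only of minimal copulas. -/
open MeasureTheory unitInterval

/-! A continuous functional attains its infimum on a compact set of copulas, and a minimizer `C`
cannot lie strictly above any `E ∈ 𝒟` in concordance order, since then `κ E < κ C`. For the set of
all copulas it remains to see that it is nonempty (it contains the product copula) and compact for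
uniform convergence. It is closed for pointwise convergence and bounded by `[0,1]`, hence
pointwise compact; and all copulas are `d`-Lipschitz, so by Arzelà–Ascoli pointwise and uniform
convergence agree on them. For the Lipschitz bound, the increment of `C` between `t ≤ s` in one
coordinate is nondecreasing in every other coordinate (a two-dimensional section of `C` is
`2`-increasing), so it is largest when all other coordinates are `1`, where it equals `s - t`. -/

open Function

section Coordinatewise

variable {ι : Type*} [Fintype ι] [DecidableEq ι] {α : ι → Type*}

theorem monotone_of_monotone_update [∀ i, Preorder (α i)] {β : Type*} [Preorder β]
    {f : (∀ i, α i) → β} (hf : ∀ w i, Monotone fun x => f (update w i x)) : Monotone f := by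
  intro u v huv
  have key : ∀ s : Finset ι, f u ≤ f (s.piecewise v u) := by
    intro s
    induction s using Finset.induction_on with
    | empty => simp
    | insert j s hj ih =>
      calc f u ≤ f (s.piecewise v u) := ih
        _ = f (update (s.piecewise v u) j (u j)) := by
          rw [Finset.update_piecewise_of_notMem _ _ _ hj, update_eq_self]
        _ ≤ f (update (s.piecewise v u) j (v j)) := hf _ j (huv j)
        _ = f ((insert j s).piecewise v u) := by rw [Finset.piecewise_insert]
  simpa using key Finset.univ

theorem lipschitzWith_card_of_dist_update_le [∀ i, PseudoMetricSpace (α i)] {Y : Type*}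
    [PseudoMetricSpace Y] {f : (∀ i, α i) → Y}
    (hf : ∀ w i x y, dist (f (update w i x)) (f (update w i y)) ≤ dist x y) :
    LipschitzWith (Fintype.card ι) f := by
  refine LipschitzWith.of_dist_le_mul fun v u => ?_
  have key : ∀ s : Finset ι, dist (f (s.piecewise v u)) (f u) ≤ s.card * dist v u := by
    intro s
    induction s using Finset.induction_on with
    | empty => simp
    | insert j s hj ih =>
      set p := s.piecewise v u
      calc dist (f ((insert j s).piecewise v u)) (f u)
          ≤ dist (f (update p j (v j))) (f (update p j (u j))) + dist (f p) (f u) := by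
            rw [← Finset.piecewise_insert, Finset.update_piecewise_of_notMem _ _ _ hj,
              update_eq_self]
            exact dist_triangle _ _ _
        _ ≤ dist v u + s.card * dist v u :=
            add_le_add ((hf _ j _ _).trans (dist_le_pi_dist v u j)) ih
        _ = (insert j s).card * dist v u := by
            rw [Finset.card_insert_of_notMem hj]
            push_cast
            ring
  simpa using key Finset.univ

end Coordinatewise

theorem Finset.sum_powerset_singleton {α β : Type*} [DecidableEq α] [AddCommMonoid β] (a : α)
    (f : Finset α → β) : ∑ t ∈ ({a} : Finset α).powerset, f t = f ∅ + f {a} := by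
  rw [← Finset.insert_empty, Finset.sum_powerset_insert (Finset.notMem_empty a)]
  simp

theorem etaK_eq_piecewise {d : ℕ} (K : Finset (Fin d)) (u v : Cube d) :
    etaK K u v = K.piecewise v u := rfl

namespace IsCopula

variable {d : ℕ} {C : Cube d → ℝ}

theorem apply_eq_zero (hC : IsCopula C) {u : Cube d} {k : Fin d} (hu : u k = 0) : C u = 0 := by
  simpa [etaK_eq_piecewise, Finset.piecewise_singleton, ← hu] using hC.2.1 k u

theorem apply_eq_of_forall_ne_eq_one (hC : IsCopula C) {u : Cube d} {k : Fin d}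
    (hu : ∀ j ≠ k, u j = 1) : C u = u k := by
  have hupd : update (1 : Cube d) k (u k) = u :=
    update_eq_iff.mpr ⟨rfl, fun j hj => (hu j hj).symm⟩
  simpa [etaK_eq_piecewise, Finset.piecewise_singleton, hupd] using hC.2.2 k u

/-- The `S`-volume of a box whose corners agree outside `S` is the `d`-volume of the box obtained
by moving its lower corner to `0` outside `S`: the vertices with a zero coordinate drop out. -/
theorem sum_powerset_nonneg (hC : IsCopula C) (S : Finset (Fin d)) {a b : Cube d} (hab : a ≤ b)
    (hS : ∀ i ∉ S, a i = b i) :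
    0 ≤ ∑ K ∈ S.powerset, (-1 : ℝ) ^ (S.card - K.card) * C (K.piecewise b a) := by
  set a' : Cube d := S.piecewise a 0
  have ha' : a' ≤ b := fun i => by
    by_cases hi : i ∈ S
    · simpa [a', hi] using hab i
    · simp [a', hi]
  have hvol := hC.1 a' b ha'
  simp only [etaK_eq_piecewise] at hvol
  rw [← Finset.sum_subset (Finset.subset_univ (S.powerset.image (· ∪ Sᶜ))), Finset.sum_image]
    at hvol
  · refine hvol.trans_eq (Finset.sum_congr rfl fun L hL => ?_)
    have hLS := Finset.mem_powerset.mp hL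
    have hpt : (L ∪ Sᶜ).piecewise b a' = L.piecewise b a := by
      ext i
      by_cases hiL : i ∈ L
      · simp [a', hiL, hLS hiL]
      · by_cases hi : i ∈ S <;> simp [a', hi, hiL, hS]
    have hcard : (L ∪ Sᶜ).card = L.card + (d - S.card) := by
      rw [Finset.card_union_of_disjoint
          (Finset.disjoint_left.mpr fun i hi => by simpa using hLS hi),
        Finset.card_compl, Fintype.card_fin]
    have hLcard := Finset.card_le_card hLS
    have hScard : S.card ≤ d := by simpa using S.card_le_univ
    rw [hpt, hcard]
    congr 2
    omega
  · intro L₁ h₁ L₂ h₂ h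
    rw [Finset.mem_coe, Finset.mem_powerset] at h₁ h₂
    ext i
    by_cases hi : i ∈ S
    · simpa [hi] using Finset.ext_iff.mp h i
    · exact iff_of_false (fun h => hi (h₁ h)) (fun h => hi (h₂ h))
  · intro K _ hK
    obtain ⟨i, hiS, hiK⟩ : ∃ i ∉ S, i ∉ K := by
      by_contra! h
      refine hK (Finset.mem_image.mpr ⟨K ∩ S, by simp, ?_⟩)
      ext i
      by_cases hi : i ∈ S <;> simp [hi, h i]
    rw [hC.apply_eq_zero (k := i) (by simp [a', hiS, hiK]), mul_zero]

theorem monotone_update (hC : IsCopula C) (w : Cube d) (k : Fin d) :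
    Monotone fun x => C (update w k x) := by
  intro t s hts
  have := hC.sum_powerset_nonneg {k} (a := update w k t) (b := update w k s)
    (update_le_update_iff'.mpr hts) (fun i hi => by simp_all)
  simpa [Finset.sum_powerset_singleton, Finset.piecewise_singleton] using this

theorem monotone_update_sub_update (hC : IsCopula C) {j k : Fin d} (hjk : j ≠ k) (w : Cube d)
    {t s : unitInterval} (hts : t ≤ s) :
    Monotone fun x => C (update (update w j x) k s) - C (update (update w j x) k t) := by
  intro r r' hr
  have hr' : update w j r ≤ update w j r' := update_le_update_iff'.mpr hr
  have := hC.sum_powerset_nonneg {k, j} (a := update (update w j r) k t)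
    (b := update (update w j r') k s) (update_le_update_iff.mpr ⟨hts, fun i _ => hr' i⟩)
    (fun i hi => by simp_all)
  rw [Finset.sum_powerset_insert (by simpa using hjk.symm)] at this
  simp [Finset.sum_powerset_singleton, Finset.piecewise_singleton, Finset.piecewise_insert,
    update_comm hjk, hjk.symm] at this
  simp only [update_comm hjk]
  linarith

theorem apply_update_sub_apply_update_le (hC : IsCopula C) (w : Cube d) (k : Fin d)
    {t s : unitInterval} (hts : t ≤ s) : C (update w k s) - C (update w k t) ≤ s - t := by
  have hmono : Monotone fun w => C (update w k s) - C (update w k t) := by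
    refine monotone_of_monotone_update fun w j => ?_
    rcases eq_or_ne j k with rfl | hjk
    · simpa using monotone_const
    · exact hC.monotone_update_sub_update hjk w hts
  have hmargin (x : unitInterval) : C (update 1 k x) = x :=
    (hC.apply_eq_of_forall_ne_eq_one fun j hj => update_of_ne hj _ _).trans (by simp)
  calc C (update w k s) - C (update w k t) ≤ C (update 1 k s) - C (update 1 k t) :=
        hmono fun i => unitInterval.le_one'
    _ = s - t := by rw [hmargin, hmargin]

theorem dist_apply_update_le (hC : IsCopula C) (w : Cube d) (k : Fin d) (x y : unitInterval) :
    dist (C (update w k x)) (C (update w k y)) ≤ dist x y := by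
  wlog hyx : y ≤ x generalizing x y
  · rw [dist_comm, dist_comm x]
    exact this y x (le_of_not_ge hyx)
  rw [Real.dist_eq, Subtype.dist_eq, Real.dist_eq,
    abs_of_nonneg (sub_nonneg.mpr (hC.monotone_update w k hyx)),
    abs_of_nonneg (sub_nonneg.mpr (Subtype.coe_le_coe.mpr hyx))]
  exact hC.apply_update_sub_apply_update_le w k hyx

theorem lipschitzWith (hC : IsCopula C) : LipschitzWith d C := by
  simpa using lipschitzWith_card_of_dist_update_le hC.dist_apply_update_le

theorem apply_mem_Icc [NeZero d] (hC : IsCopula C) (u : Cube d) : C u ∈ Set.Icc 0 1 := by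
  have hzero : C (update u 0 0) = 0 := hC.apply_eq_zero (k := 0) (by simp)
  have hle := hC.apply_update_sub_apply_update_le u 0 (unitInterval.nonneg' (t := u 0))
  have hge := hC.monotone_update u 0 (unitInterval.nonneg' (t := u 0))
  simp only [update_eq_self, hzero, Set.Icc.coe_zero] at hle hge
  exact ⟨hge, by linarith [(u 0).2.2]⟩

end IsCopula

section CopulaSpace

variable {d : ℕ}

theorem isCopula_prod : IsCopula fun u : Cube d => ∏ k, (u k : ℝ) := by
  refine ⟨fun u v huv => ?_, fun k u => ?_, fun k u => ?_⟩
  · have hvol : ∑ K : Finset (Fin d), (-1 : ℝ) ^ (d - K.card) * ∏ k, (etaK K u v k : ℝ)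
        = ∏ k, ((v k : ℝ) + -(u k : ℝ)) := by
      rw [Finset.prod_add, Finset.powerset_univ]
      refine Finset.sum_congr rfl fun K _ => ?_
      have hcoe : ∏ k, (K.piecewise v u k : ℝ)
          = ∏ k, K.piecewise (fun k => (v k : ℝ)) (fun k => u k) k :=
        Finset.prod_congr rfl fun k _ => by by_cases hk : k ∈ K <;> simp [hk]
      rw [etaK_eq_piecewise, hcoe, Finset.prod_piecewise, Finset.prod_neg, Finset.univ_inter,
        Finset.card_univ_sdiff, Fintype.card_fin]
      ring
    rw [hvol]
    exact Finset.prod_nonneg fun k _ => by simpa [← sub_eq_add_neg] using huv k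
  · exact Finset.prod_eq_zero (Finset.mem_univ k) (by simp [etaK])
  · simp only [etaK_eq_piecewise, Finset.piecewise_singleton]
    rw [Finset.prod_eq_single k (fun j _ hj => by simp [hj]) (by simp)]
    simp

theorem isClosed_setOf_isCopula : IsClosed {C : Cube d → ℝ | IsCopula C} := by
  simp only [IsCopula, Set.ofPred_and, Set.ofPred_forall]
  refine .inter (isClosed_iInter fun u => isClosed_iInter fun v => isClosed_iInter fun _ =>
    isClosed_le continuous_const (by fun_prop)) (.inter ?_ ?_) <;>
  exact isClosed_iInter fun k => isClosed_iInter fun u =>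
    isClosed_eq (continuous_apply _) continuous_const

theorem isCompact_setOf_isCopula [NeZero d] :
    IsCompact (UniformFun.ofFun '' {C : Cube d → ℝ | IsCopula C}) := by
  set T := {C : Cube d → ℝ | IsCopula C}
  have hT : IsCompact T :=
    (isCompact_univ_pi fun _ => isCompact_Icc).of_isClosed_subset isClosed_setOf_isCopula
      fun C hC u _ => hC.apply_mem_Icc u
  have : CompactSpace T := isCompact_iff_compactSpace.mp hT
  have hequi : Equicontinuous ((↑) : T → Cube d → ℝ) :=
    (LipschitzWith.uniformEquicontinuous _ d fun C => C.2.lipschitzWith).equicontinuous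
  have hind : Topology.IsInducing (UniformFun.ofFun ∘ ((↑) : T → Cube d → ℝ)) :=
    hequi.inducing_uniformFun_iff_pi.mpr Topology.IsInducing.subtypeVal
  simpa [Set.range_comp] using isCompact_range hind.continuous

end CopulaSpace

section Minimizers

variable {d : ℕ} {κ : (Cube d → ℝ) → ℝ} {𝒟 : Set (Cube d → ℝ)} {C D E : Cube d → ℝ}

theorem mem_minSet_of_isMinOn (hD : D ∈ 𝒟) (hmin : IsMinOn κ 𝒟 D) : D ∈ MinSet κ 𝒟 :=
  ⟨hD, ((hmin.isGLB hD).csInf_eq ⟨_, D, hD, rfl⟩).symm⟩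

theorem isMinOn_of_mem_minSet (hbdd : BddBelow (κ '' 𝒟)) (hC : C ∈ MinSet κ 𝒟) :
    IsMinOn κ 𝒟 C :=
  isMinOn_iff.mpr fun E hE => hC.2 ▸ csInf_le hbdd ⟨E, hE, rfl⟩

theorem ContinuousFunctional.continuousOn (hκ : ContinuousFunctional κ) :
    ContinuousOn (fun f : UniformFun (Cube d) ℝ => κ (UniformFun.toFun f))
      {f | IsCopula (UniformFun.toFun f)} := by
  rw [continuousOn_iff_continuous_domRestrict]
  refine SeqContinuous.continuous fun fs f hfs => ?_
  have hunif := (continuous_subtype_val.tendsto f).comp hfs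
  rw [UniformFun.tendsto_iff_tendstoUniformly] at hunif
  exact hκ _ _ (fun n => (fs n).2) f.2 hunif

theorem ContinuousFunctional.exists_isMinOn (hκ : ContinuousFunctional κ)
    (h𝒟cop : ∀ C ∈ 𝒟, IsCopula C) (h𝒟ne : 𝒟.Nonempty)
    (h𝒟cpt : IsCompact (UniformFun.ofFun '' 𝒟 : Set (UniformFun (Cube d) ℝ))) :
    ∃ D ∈ 𝒟, IsMinOn κ 𝒟 D := by
  obtain ⟨_, ⟨D, hD, rfl⟩, hmin⟩ := h𝒟cpt.exists_isMinOn (h𝒟ne.image _)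
    (hκ.continuousOn.mono (Set.image_subset_iff.mpr h𝒟cop))
  exact ⟨D, hD, fun E hE => hmin ⟨E, hE, rfl⟩⟩

theorem StrictConcPreserving.eq_of_isMinOn_of_concLE (hκ : StrictConcPreserving κ)
    (h𝒟cop : ∀ C ∈ 𝒟, IsCopula C) (hC : C ∈ 𝒟) (hmin : IsMinOn κ 𝒟 C) (hE : E ∈ 𝒟)
    (hEC : ConcLE E C) : E = C := by
  by_contra hne
  exact (hmin hE).not_gt (hκ.2 E C (h𝒟cop E hE) (h𝒟cop C hC) hEC hne)

theorem minSet_nonempty_and_eq_of_concLE (hκc : ContinuousFunctional κ)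
    (hκs : StrictConcPreserving κ) (h𝒟cop : ∀ C ∈ 𝒟, IsCopula C) (h𝒟ne : 𝒟.Nonempty)
    (h𝒟cpt : IsCompact (UniformFun.ofFun '' 𝒟 : Set (UniformFun (Cube d) ℝ))) :
    (MinSet κ 𝒟).Nonempty ∧ ∀ C ∈ MinSet κ 𝒟, ∀ E ∈ 𝒟, ConcLE E C → E = C := by
  obtain ⟨D, hD, hmin⟩ := hκc.exists_isMinOn h𝒟cop h𝒟ne h𝒟cpt
  exact ⟨⟨D, mem_minSet_of_isMinOn hD hmin⟩, fun C hC E hE =>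
    hκs.eq_of_isMinOn_of_concLE h𝒟cop hC.1 (isMinOn_of_mem_minSet hmin.bddBelow hC) hE⟩

end Minimizers

/-- For a continuous, strictly concordance order preserving functional, the set of
minimizers over any nonempty compact set of copulas is nonempty and consists only of
minimal elements; in particular its set of minimizers over all copulas is a nonempty set
of minimal copulas. -/
theorem stmt14 (d : ℕ) (hd : 2 ≤ d) (κ : (Cube d → ℝ) → ℝ)
    (hκc : ContinuousFunctional κ) (hκs : StrictConcPreserving κ)
    (𝒟 : Set (Cube d → ℝ))
    (h𝒟cop : ∀ C ∈ 𝒟, IsCopula C) (h𝒟ne : 𝒟.Nonempty)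
    (h𝒟cpt : IsCompact (UniformFun.ofFun '' 𝒟 : Set (UniformFun (Cube d) ℝ))) :
    ((MinSet κ 𝒟).Nonempty ∧ ∀ C ∈ MinSet κ 𝒟, ∀ E ∈ 𝒟, ConcLE E C → E = C) ∧
    ((MinSet κ {C : Cube d → ℝ | IsCopula C}).Nonempty ∧
      ∀ C ∈ MinSet κ {C : Cube d → ℝ | IsCopula C}, IsMinimalCopula C) := by
  have : NeZero d := ⟨by omega⟩
  obtain ⟨hne, hmin⟩ := minSet_nonempty_and_eq_of_concLE hκc hκs (fun C hC => hC)
    ⟨fun u => ∏ k, (u k : ℝ), isCopula_prod⟩ isCompact_setOf_isCopula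
  exact ⟨minSet_nonempty_and_eq_of_concLE hκc hκs h𝒟cop h𝒟ne h𝒟cpt, hne,
    fun C hC => ⟨hC.1, fun D hD hDC => hmin C hC D hD hDC⟩⟩
end
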